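/- Let C ∈ ℝ^{V×k} have full column rank k, let δ > 0, and let C^δ be the δ-enlargement of C. Then for every point x of conv(C^δ) that can be written x = ∑_{f=1}^k α_f c_f^δ with α in the simplex Δ^{k−1} and α_f = 0 for at least one index f (i.e., x on the relative boundary of conv(C^δ)), the Euclidean distance from x to conv(C) satisfies δ ≤ dist(x, conv(C)) ≤ κ(C)·k·δ, where κ(C) = σ_max(C)/σ⁺_min(C). -/

import Mathlib

/-! With `s = ρ(C) δ` and `u = (1/k, …, 1/k)`, a point of `conv(C^δ)` with weights `α` is
`x = C w` for `w = α + s (α - u)`. For `β` in the simplex, `x - C β = C (w - β)` and, since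
`α f₀ = 0`, `|(w - β) f₀| = s / k + β f₀ ≥ δ / σ_min`; hence
`‖x - C β‖ ≥ σ_min ‖w - β‖ ≥ δ`. Conversely `x - C α = s C (α - u)` with `‖α - u‖ ≤ 1`, so
`dist(x, conv C) ≤ s σ_max = κ(C) k δ`. -/

open scoped BigOperators ENNReal NNReal
open MeasureTheory Matrix

noncomputable section

/-- Euclidean (ℓ²) norm of a vector in `Fin m → ℝ`. -/
def l2 {m : ℕ} (x : Fin m → ℝ) : ℝ := Real.sqrt (∑ i, x i ^ 2)

/-- The `f`-th standard basis vector of `ℝ^k`. -/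
def eVec (k : ℕ) (f : Fin k) : Fin k → ℝ := fun i => if i = f then 1 else 0

/-- Euclidean distance from a point to a set in `Fin p → ℝ`. -/
def distToSet {p : ℕ} (x : Fin p → ℝ) (S : Set (Fin p → ℝ)) : ℝ :=
  sInf ((fun y => l2 (x - y)) '' S)

/-- Smallest singular value via the variational characterization `min_{‖x‖₂=1} ‖Ax‖₂`
(this is the smallest positive singular value when `A` has full column rank). -/
def sigMin {p q : ℕ} (A : Matrix (Fin p) (Fin q) ℝ) : ℝ :=
  sInf ((fun x => l2 (A.mulVec x)) '' {x | l2 x = 1})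

/-- Largest singular value, via `max_{‖x‖₂=1} ‖Ax‖₂`. -/
def sigMax {p q : ℕ} (A : Matrix (Fin p) (Fin q) ℝ) : ℝ :=
  sSup ((fun x => l2 (A.mulVec x)) '' {x | l2 x = 1})

/-- `ρ(C) = k / σ⁺_min(C)`. -/
def rho {p q : ℕ} (C : Matrix (Fin p) (Fin q) ℝ) : ℝ := q / sigMin C

/-- The `δ`-enlargement of `C`: each column is pushed away from the barycenter `c̄` of
the columns by the factor `1 + ρ(C)δ`. -/
def enlarge {p q : ℕ} (C : Matrix (Fin p) (Fin q) ℝ) (δ : ℝ) :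
    Matrix (Fin p) (Fin q) ℝ :=
  Matrix.of fun i f =>
    (1 + rho C * δ) * (C i f - (∑ g, C i g) / q) + (∑ g, C i g) / q

section L2

variable {m : ℕ}

lemma l2_eq_norm (x : Fin m → ℝ) : l2 x = ‖WithLp.toLp 2 x‖ := by
  simp [l2, EuclideanSpace.norm_eq]

lemma l2_nonneg (x : Fin m → ℝ) : 0 ≤ l2 x := Real.sqrt_nonneg _

lemma l2_zero : l2 (0 : Fin m → ℝ) = 0 := by simp [l2]

lemma l2_pos {x : Fin m → ℝ} (hx : x ≠ 0) : 0 < l2 x := by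
  rw [l2_eq_norm]
  exact norm_pos_iff.mpr (by simpa using hx)

lemma l2_smul (c : ℝ) (x : Fin m → ℝ) : l2 (c • x) = |c| * l2 x := by
  rw [l2_eq_norm, l2_eq_norm, WithLp.toLp_smul, norm_smul, Real.norm_eq_abs]

lemma abs_le_l2 (x : Fin m → ℝ) (j : Fin m) : |x j| ≤ l2 x := by
  rw [l2, ← Real.sqrt_sq_eq_abs]
  exact Real.sqrt_le_sqrt (Finset.single_le_sum (fun i _ => sq_nonneg (x i)) (Finset.mem_univ j))

lemma continuous_l2 : Continuous (l2 : (Fin m → ℝ) → ℝ) := by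
  simp only [funext l2_eq_norm]
  exact (PiLp.continuous_toLp 2 _).norm

lemma isCompact_setOf_l2_eq_one : IsCompact {x : Fin m → ℝ | l2 x = 1} := by
  refine Metric.isCompact_of_isClosed_isBounded (isClosed_eq continuous_l2 continuous_const) ?_
  refine (Metric.isBounded_iff_subset_closedBall 0).mpr ⟨1, fun x hx => ?_⟩
  rw [mem_closedBall_zero_iff, pi_norm_le_iff_of_nonneg zero_le_one]
  exact fun j => hx ▸ abs_le_l2 x j

lemma l2_eVec (f : Fin m) : l2 (eVec m f) = 1 := by
  simp [l2, eVec]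

lemma l2_sub_barycenter_le_one {α : Fin m → ℝ} (hα : α ∈ stdSimplex ℝ (Fin m)) :
    l2 (α - fun _ => (m : ℝ)⁻¹) ≤ 1 := by
  obtain ⟨hα0, hα1⟩ := hα
  have hm : (m : ℝ) ≠ 0 := by
    rintro h
    simp_all [Fin.isEmpty']
  have hsq : ∑ f, α f ^ 2 ≤ 1 := by
    simpa [hα1] using Finset.sum_sq_le_sq_sum_of_nonneg (s := Finset.univ) fun f _ => hα0 f
  have hexpand : ∑ f, (α f - (m : ℝ)⁻¹) ^ 2 = ∑ f, α f ^ 2 - (m : ℝ)⁻¹ := by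
    simp only [sub_sq, Finset.sum_add_distrib, Finset.sum_sub_distrib, ← Finset.sum_mul,
      ← Finset.mul_sum, hα1, Finset.sum_const, Finset.card_univ, Fintype.card_fin, nsmul_eq_mul]
    field_simp
    ring
  rw [l2, ← Real.sqrt_one]
  refine Real.sqrt_le_sqrt ?_
  simp only [Pi.sub_apply, hexpand]
  linarith [inv_nonneg.mpr (m.cast_nonneg : (0 : ℝ) ≤ m)]

end L2

section SingularValues

variable {p q : ℕ} (A : Matrix (Fin p) (Fin q) ℝ)

lemma isCompact_image_l2_mulVec :
    IsCompact ((fun x => l2 (A *ᵥ x)) '' {x | l2 x = 1}) :=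
  isCompact_setOf_l2_eq_one.image (continuous_l2.comp (Continuous.matrix_mulVec
    continuous_const continuous_id))

lemma div_l2_mem_image_l2_mulVec {v : Fin q → ℝ} (hv : v ≠ 0) :
    l2 (A *ᵥ v) / l2 v ∈ (fun x => l2 (A *ᵥ x)) '' {x | l2 x = 1} := by
  have hv' := l2_pos hv
  refine ⟨(l2 v)⁻¹ • v, ?_, ?_⟩
  · rw [Set.mem_ofPred_eq, l2_smul, abs_of_pos (inv_pos.mpr hv'), inv_mul_cancel₀ hv'.ne']
  · dsimp only
    rw [mulVec_smul, l2_smul, abs_of_pos (inv_pos.mpr hv'), inv_mul_eq_div]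

lemma sigMin_nonneg : 0 ≤ sigMin A :=
  Real.sInf_nonneg (by rintro _ ⟨x, -, rfl⟩; exact l2_nonneg _)

lemma sigMax_nonneg : 0 ≤ sigMax A :=
  Real.sSup_nonneg (by rintro _ ⟨x, -, rfl⟩; exact l2_nonneg _)

lemma sigMin_mul_l2_le (v : Fin q → ℝ) : sigMin A * l2 v ≤ l2 (A *ᵥ v) := by
  rcases eq_or_ne v 0 with rfl | hv
  · rw [l2_zero, mul_zero]
    exact l2_nonneg _
  · have hmin : sigMin A ≤ l2 (A *ᵥ v) / l2 v :=
      csInf_le ⟨0, by rintro _ ⟨x, -, rfl⟩; exact l2_nonneg _⟩ (div_l2_mem_image_l2_mulVec A hv)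
    rwa [le_div_iff₀ (l2_pos hv)] at hmin

lemma l2_mulVec_le (v : Fin q → ℝ) : l2 (A *ᵥ v) ≤ sigMax A * l2 v := by
  rcases eq_or_ne v 0 with rfl | hv
  · simp only [mulVec_zero, l2_zero, mul_zero, le_refl]
  · have hmax : l2 (A *ᵥ v) / l2 v ≤ sigMax A :=
      le_csSup (isCompact_image_l2_mulVec A).bddAbove (div_l2_mem_image_l2_mulVec A hv)
    rwa [div_le_iff₀ (l2_pos hv)] at hmax

lemma sigMin_pos_of_injective [NeZero q] (hA : Function.Injective A.mulVec) :
    0 < sigMin A := by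
  obtain ⟨v, hv, hmin⟩ := (isCompact_image_l2_mulVec A).sInf_mem ⟨_, eVec q 0, l2_eVec 0, rfl⟩
  have hv0 : v ≠ 0 := by
    rintro rfl
    simp [l2_zero] at hv
  rw [sigMin, ← hmin]
  exact l2_pos fun h => hv0 (hA (h.trans (mulVec_zero A).symm))

lemma sigMin_pos_of_rank_eq [NeZero q] (hA : A.rank = q) : 0 < sigMin A := by
  refine sigMin_pos_of_injective A (mulVec_injective_iff.mpr ?_)
  rw [linearIndependent_iff_card_eq_finrank_span, Fintype.card_fin, Set.finrank,
    ← rank_eq_finrank_span_cols, hA]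

end SingularValues

section Distance

variable {p : ℕ} {x : Fin p → ℝ} {S : Set (Fin p → ℝ)}

lemma distToSet_le {y : Fin p → ℝ} (hy : y ∈ S) : distToSet x S ≤ l2 (x - y) :=
  csInf_le ⟨0, by rintro _ ⟨z, -, rfl⟩; exact l2_nonneg _⟩ ⟨y, hy, rfl⟩

lemma le_distToSet {d : ℝ} (hS : S.Nonempty) (h : ∀ y ∈ S, d ≤ l2 (x - y)) :
    d ≤ distToSet x S :=
  le_csInf (hS.image _) (by rintro _ ⟨y, hy, rfl⟩; exact h y hy)

end Distance

section Enlargement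

variable {p q : ℕ} (C : Matrix (Fin p) (Fin q) ℝ)

lemma convexHull_cols_eq_image_stdSimplex :
    convexHull ℝ (Set.range fun j : Fin q => fun i => C i j) =
      C.mulVecLin '' stdSimplex ℝ (Fin q) := by
  classical
  rw [← convexHull_basis_eq_stdSimplex, LinearMap.image_convexHull, ← Set.range_comp]
  congr
  funext j i
  simp [mulVec, dotProduct]

lemma enlarge_mulVec (δ : ℝ) {α : Fin q → ℝ} (hα : ∑ f, α f = 1) :
    enlarge C δ *ᵥ α = C *ᵥ (α + (rho C * δ) • (α - fun _ => (q : ℝ)⁻¹)) := by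
  ext i
  simp only [mulVec, dotProduct, enlarge, of_apply, Pi.add_apply, Pi.smul_apply, Pi.sub_apply,
    smul_eq_mul, mul_add, add_mul, mul_sub, sub_mul, mul_assoc, mul_left_comm (C i _),
    Finset.sum_add_distrib, Finset.sum_sub_distrib, ← Finset.mul_sum, ← Finset.sum_mul, hα]
  ring

end Enlargement

section DistanceToHull

variable {p q : ℕ} {C : Matrix (Fin p) (Fin q) ℝ} {α : Fin q → ℝ}

theorem le_distToSet_enlarge_mulVec (hC : 0 < sigMin C) (δ : ℝ) (hα : α ∈ stdSimplex ℝ (Fin q))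
    {f₀ : Fin q} (hf₀ : α f₀ = 0) :
    δ ≤ distToSet (enlarge C δ *ᵥ α)
      (convexHull ℝ (Set.range fun j : Fin q => fun i => C i j)) := by
  rw [convexHull_cols_eq_image_stdSimplex, enlarge_mulVec C δ hα.2]
  refine le_distToSet ⟨_, α, hα, rfl⟩ ?_
  rintro _ ⟨β, hβ, rfl⟩
  rw [mulVecLin_apply, ← mulVec_sub]
  set w := α + (rho C * δ) • (α - fun _ => (q : ℝ)⁻¹) - β
  have hq : (q : ℝ) ≠ 0 := Nat.cast_ne_zero.mpr f₀.pos.ne'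
  have hw : -w f₀ = δ / sigMin C + β f₀ := by
    simp only [w, Pi.sub_apply, Pi.add_apply, Pi.smul_apply, smul_eq_mul, hf₀, rho]
    field_simp
    ring
  calc δ = sigMin C * (δ / sigMin C) := by field_simp
    _ ≤ sigMin C * |w f₀| := by
        gcongr
        linarith [neg_le_abs (w f₀), hβ.1 f₀]
    _ ≤ sigMin C * l2 w := by gcongr; exact abs_le_l2 w f₀
    _ ≤ l2 (C *ᵥ w) := sigMin_mul_l2_le C w

theorem distToSet_enlarge_mulVec_le {δ : ℝ} (hδ : 0 ≤ δ) (hα : α ∈ stdSimplex ℝ (Fin q)) :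
    distToSet (enlarge C δ *ᵥ α) (convexHull ℝ (Set.range fun j : Fin q => fun i => C i j)) ≤
      sigMax C / sigMin C * q * δ := by
  rw [convexHull_cols_eq_image_stdSimplex]
  have hs : 0 ≤ rho C * δ := mul_nonneg (div_nonneg q.cast_nonneg (sigMin_nonneg C)) hδ
  calc distToSet _ _ ≤ l2 (enlarge C δ *ᵥ α - C *ᵥ α) :=
        distToSet_le (S := C.mulVecLin '' stdSimplex ℝ (Fin q)) ⟨α, hα, rfl⟩
    _ = rho C * δ * l2 (C *ᵥ (α - fun _ => (q : ℝ)⁻¹)) := by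
        rw [enlarge_mulVec C δ hα.2, ← mulVec_sub, add_sub_cancel_left, mulVec_smul, l2_smul,
          abs_of_nonneg hs]
    _ ≤ rho C * δ * (sigMax C * 1) := by
        gcongr
        exact (l2_mulVec_le C _).trans
          (mul_le_mul_of_nonneg_left (l2_sub_barycenter_le_one hα) (sigMax_nonneg C))
    _ = sigMax C / sigMin C * q * δ := by rw [rho]; ring

end DistanceToHull

/-- The distance from any relative-boundary point of the `δ`-enlargement of `conv(C)` to
`conv(C)` is between `δ` and `κ(C)·k·δ`. -/
theorem stmt14 {V k : ℕ} (C : Matrix (Fin V) (Fin k) ℝ) (hrank : C.rank = k)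
    (δ : ℝ) (hδ : 0 < δ) (α : Fin k → ℝ) (hα0 : ∀ f, 0 ≤ α f) (hα1 : ∑ f, α f = 1)
    (f₀ : Fin k) (hf₀ : α f₀ = 0) (x : Fin V → ℝ)
    (hx : x = fun i => ∑ f, α f * enlarge C δ i f) :
    δ ≤ distToSet x (convexHull ℝ (Set.range fun j : Fin k => fun i => C i j)) ∧
    distToSet x (convexHull ℝ (Set.range fun j : Fin k => fun i => C i j)) ≤
      (sigMax C / sigMin C) * k * δ := by
  have hxα : x = enlarge C δ *ᵥ α := by
    rw [hx]
    ext i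
    simp only [mulVec, dotProduct, mul_comm]
  have hα : α ∈ stdSimplex ℝ (Fin k) := ⟨hα0, hα1⟩
  have : NeZero k := ⟨f₀.pos.ne'⟩
  rw [hxα]
  exact ⟨le_distToSet_enlarge_mulVec (sigMin_pos_of_rank_eq C hrank) δ hα hf₀,
    distToSet_enlarge_mulVec_le hδ.le hα⟩
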